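/- Let g̃ : O⁺ → ℝ^{d×d} be a Lipschitz field of symmetric positive definite matrices on O⁺ = {(x', x_d) : |x'| < δ, 0 < x_d < ε}, satisfying g̃_{jd}(x', 0) = g̃_{dj}(x', 0) = 0 for all 1 ≤ j ≤ d-1. Define h on O = {(x', x_d) : |x'| < δ, -ε < x_d < ε} by h_{jk}(x', x_d) = g̃_{jk}(x', |x_d|) if 1 ≤ j, k ≤ d-1 or j = k = d, and h_{jd}(x', x_d) = h_{dj}(x', x_d) = sign(x_d) · g̃_{jd}(x', |x_d|) for 1 ≤ j ≤ d-1. Then h is Lipschitz on O. -/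

import Mathlib

/-!
The map `(x', t) ↦ (x', |t|)` is `1`-Lipschitz for the product metric, so the even reflection
of a `K`-Lipschitz function on the half strip is `K`-Lipschitz on the strip. For the odd
reflection of a mixed entry `g̃_{jd}`, vanishing on `t = 0` gives `|g̃_{jd}(x', t)| ≤ K t`;
for two points on opposite sides of the hyperplane this bounds the difference of the values by
`K (|p_d| + |q_d|) = K |p_d - q_d|`, while on either side the odd reflection is `±g̃_{jd}`.
-/

open Set Metric

theorem abs_sub_le_mul_abs_sub_of_mul_nonpos {a b s t K : ℝ} (ha : |a| ≤ K * |s|)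
    (hb : |b| ≤ K * |t|) (hst : s * t ≤ 0) : |a - b| ≤ K * |s - t| := by
  have hsum : |s - t| = |s| + |t| := by
    have := (abs_add_eq_add_abs_iff s (-t)).2 (by simpa using mul_nonpos_iff.1 hst)
    simpa [sub_eq_add_neg] using this
  calc |a - b| ≤ |a| + |b| := abs_sub a b
    _ ≤ K * |s| + K * |t| := add_le_add ha hb
    _ = K * |s - t| := by rw [hsum, mul_add]

theorem lipschitzWith_prodMk_fst_abs_snd {E : Type*} [PseudoMetricSpace E] :
    LipschitzWith 1 fun p : E × ℝ => (p.1, |p.2|) := by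
  have habs : LipschitzWith 1 (abs : ℝ → ℝ) := lipschitzWith_one_norm
  simpa using LipschitzWith.prod_fst.prodMk (habs.comp LipschitzWith.prod_snd)

theorem mapsTo_prodMk_fst_abs_snd {E : Type*} {U : Set E} {ε : ℝ} :
    MapsTo (fun p : E × ℝ => (p.1, |p.2|)) (U ×ˢ Ioo (-ε) ε) (U ×ˢ Ico 0 ε) :=
  fun _ ⟨hx, ht⟩ => ⟨hx, abs_nonneg _, abs_lt.2 ht⟩

section Reflection

variable {E : Type*} [PseudoMetricSpace E] {U : Set E} {ε : ℝ} {K : NNReal} {F : E × ℝ → ℝ}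

theorem LipschitzOnWith.comp_prodMk_fst_abs_snd (hF : LipschitzOnWith K F (U ×ˢ Ico 0 ε)) :
    LipschitzOnWith K (fun p => F (p.1, |p.2|)) (U ×ˢ Ioo (-ε) ε) := by
  simpa [Function.comp_def] using
    hF.comp lipschitzWith_prodMk_fst_abs_snd.lipschitzOnWith mapsTo_prodMk_fst_abs_snd

theorem LipschitzOnWith.abs_le_mul_snd_of_eq_zero (hF : LipschitzOnWith K F (U ×ˢ Ico 0 ε))
    (hF0 : ∀ x ∈ U, F (x, 0) = 0) {p : E × ℝ} (hp : p ∈ U ×ˢ Ico 0 ε) : |F p| ≤ K * p.2 := by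
  obtain ⟨x, t⟩ := p
  obtain ⟨hx, ht0, htε⟩ := hp
  have hx0 : (x, (0 : ℝ)) ∈ U ×ˢ Ico 0 ε := ⟨hx, left_mem_Ico.2 (ht0.trans_lt htε)⟩
  simpa [hF0 x hx, Real.dist_eq, dist_prod_same_left, abs_of_nonneg ht0] using
    hF.dist_le_mul (x, t) ⟨hx, ht0, htε⟩ (x, 0) hx0

theorem LipschitzOnWith.sign_mul_comp_prodMk_fst_abs_snd
    (hF : LipschitzOnWith K F (U ×ˢ Ico 0 ε)) (hF0 : ∀ x ∈ U, F (x, 0) = 0) :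
    LipschitzOnWith K (fun p => Real.sign p.2 * F (p.1, |p.2|)) (U ×ˢ Ioo (-ε) ε) := by
  have hEven := hF.comp_prodMk_fst_abs_snd
  have hsmall : ∀ p ∈ U ×ˢ Ioo (-ε) ε, |Real.sign p.2 * F (p.1, |p.2|)| ≤ K * |p.2| := by
    intro p hp
    rw [abs_mul]
    calc |Real.sign p.2| * |F (p.1, |p.2|)| ≤ 1 * (K * |p.2|) := by
          gcongr
          · rcases Real.sign_apply_eq p.2 with h | h | h <;> simp [h]
          · exact hF.abs_le_mul_snd_of_eq_zero hF0 (mapsTo_prodMk_fst_abs_snd hp)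
      _ = K * |p.2| := one_mul _
  refine LipschitzOnWith.of_dist_le_mul fun p hp q hq => ?_
  by_cases hmix : p.2 * q.2 ≤ 0
  · have hdist : |p.2 - q.2| ≤ dist p q := by
      rw [Prod.dist_eq, ← Real.dist_eq]; exact le_max_right _ _
    rw [Real.dist_eq]
    calc _ ≤ K * |p.2 - q.2| :=
          abs_sub_le_mul_abs_sub_of_mul_nonpos (hsmall p hp) (hsmall q hq) hmix
      _ ≤ K * dist p q := by gcongr
  · rcases pos_and_pos_or_neg_and_neg_of_mul_pos (not_le.1 hmix) with ⟨hp0, hq0⟩ | ⟨hp0, hq0⟩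
    · rw [Real.sign_of_pos hp0, Real.sign_of_pos hq0, one_mul, one_mul]
      exact hEven.dist_le_mul p hp q hq
    · rw [Real.sign_of_neg hp0, Real.sign_of_neg hq0, neg_one_mul, neg_one_mul, dist_neg_neg]
      exact hEven.dist_le_mul p hp q hq

end Reflection

theorem reflected_metric_lipschitz_general (n : ℕ) (δ ε : ℝ)
    (K : NNReal)
    (g h : EuclideanSpace ℝ (Fin n) × ℝ → Fin (n + 1) → Fin (n + 1) → ℝ)
    (hLip : ∀ j k, LipschitzOnWith K (fun p => g p j k)
      {p | ‖p.1‖ < δ ∧ 0 ≤ p.2 ∧ p.2 < ε})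
    (hbd : ∀ x' : EuclideanSpace ℝ (Fin n), ‖x'‖ < δ →
      ∀ j : Fin (n + 1), j ≠ Fin.last n →
        g (x', 0) j (Fin.last n) = 0 ∧ g (x', 0) (Fin.last n) j = 0)
    (hh : ∀ p j k, h p j k =
      if (j = Fin.last n ∧ k = Fin.last n) ∨ (j ≠ Fin.last n ∧ k ≠ Fin.last n)
      then g (p.1, |p.2|) j k
      else Real.sign p.2 * g (p.1, |p.2|) j k) :
    ∃ K' : NNReal, ∀ j k, LipschitzOnWith K' (fun p => h p j k)
      {p | ‖p.1‖ < δ ∧ |p.2| < ε} := by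
  have hhalf : {p : EuclideanSpace ℝ (Fin n) × ℝ | ‖p.1‖ < δ ∧ 0 ≤ p.2 ∧ p.2 < ε} =
      ball 0 δ ×ˢ Ico 0 ε := by
    ext; simp
  have hstrip : {p : EuclideanSpace ℝ (Fin n) × ℝ | ‖p.1‖ < δ ∧ |p.2| < ε} =
      ball 0 δ ×ˢ Ioo (-ε) ε := by
    ext; simp [abs_lt]
  refine ⟨K, fun j k => ?_⟩
  have hg := hLip j k
  rw [hhalf] at hg
  rw [hstrip]
  by_cases hdiag : (j = Fin.last n ∧ k = Fin.last n) ∨ (j ≠ Fin.last n ∧ k ≠ Fin.last n)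
  · simp only [hh, if_pos hdiag]
    exact hg.comp_prodMk_fst_abs_snd
  · simp only [hh, if_neg hdiag]
    refine hg.sign_mul_comp_prodMk_fst_abs_snd fun x hx => ?_
    have hx' : ‖x‖ < δ := mem_ball_zero_iff.1 hx
    push Not at hdiag
    by_cases hj : j = Fin.last n
    · subst hj
      exact (hbd x hx' k (hdiag.1 rfl)).2
    · obtain rfl := hdiag.2 hj
      exact (hbd x hx' j hj).1

/-- The reflected extension h of a Lipschitz symmetric positive definite
matrix field g̃ (with vanishing mixed entries g̃_{jd}(x',0) = 0) is Lipschitz on the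
full strip. Points of ℝ^d are modelled as (x', x_d) ∈ ℝ^{d-1} × ℝ, matrix indices by
Fin (n+1) with last index the normal direction. -/
theorem reflected_metric_lipschitz (n : ℕ) (δ ε : ℝ) (hδ : 0 < δ) (hε : 0 < ε)
    (K : NNReal)
    (g h : EuclideanSpace ℝ (Fin n) × ℝ → Fin (n + 1) → Fin (n + 1) → ℝ)
    (hLip : ∀ j k, LipschitzOnWith K (fun p => g p j k)
      {p | ‖p.1‖ < δ ∧ 0 ≤ p.2 ∧ p.2 < ε})
    (hsymm : ∀ p ∈ {p : EuclideanSpace ℝ (Fin n) × ℝ | ‖p.1‖ < δ ∧ 0 ≤ p.2 ∧ p.2 < ε},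
      ∀ j k, g p j k = g p k j)
    (hpos : ∀ p ∈ {p : EuclideanSpace ℝ (Fin n) × ℝ | ‖p.1‖ < δ ∧ 0 ≤ p.2 ∧ p.2 < ε},
      ∀ ξ : Fin (n + 1) → ℝ, ξ ≠ 0 → 0 < ∑ j, ∑ k, g p j k * ξ j * ξ k)
    (hbd : ∀ x' : EuclideanSpace ℝ (Fin n), ‖x'‖ < δ →
      ∀ j : Fin (n + 1), j ≠ Fin.last n →
        g (x', 0) j (Fin.last n) = 0 ∧ g (x', 0) (Fin.last n) j = 0)
    (hh : ∀ p j k, h p j k =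
      if (j = Fin.last n ∧ k = Fin.last n) ∨ (j ≠ Fin.last n ∧ k ≠ Fin.last n)
      then g (p.1, |p.2|) j k
      else Real.sign p.2 * g (p.1, |p.2|) j k) :
    ∃ K' : NNReal, ∀ j k, LipschitzOnWith K' (fun p => h p j k)
      {p | ‖p.1‖ < δ ∧ |p.2| < ε} :=
  reflected_metric_lipschitz_general n δ ε K g h hLip hbd hh
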